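/- Assume condition (*). Let v ∈ V \ {0} and let U be the eigenspace of Λ_V with eigenvalue d(v). Given any subsequence (α) of the indices such that B_{α+1} converges to g e^{Λ} g^{-1} for some g ∈ K, there is a further subsequence (β) along which [ρ(A_β) v] converges in the projective space ℙ(V) to a point [w] with ρ(g)^{-1} w ∈ U. -/

import Mathlib

open Filter Topology NormedSpace
open scoped LinearAlgebra.Projectivization

set_option linter.unusedSectionVars false

noncomputable section

namespace CSW

variable {E : Type*} [NormedAddCommGroup E] [InnerProductSpace ℂ E] [FiniteDimensional ℂ E]
variable {V : Type*} [NormedAddCommGroup V] [InnerProductSpace ℂ V] [FiniteDimensional ℂ V]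

/-- The exponential `e^T` of a bounded operator, as a unit (invertible element) of the algebra
of continuous linear endomorphisms. -/
def expUnit (T : E →L[ℂ] E) : (E →L[ℂ] E)ˣ where
  val := exp T
  inv := exp (-T)
  val_inv := by
    letI : NormedAlgebra ℚ (E →L[ℂ] E) := NormedAlgebra.restrictScalars ℚ ℂ _
    rw [← exp_add_of_commute (Commute.refl T).neg_right, add_neg_cancel, exp_zero]
  inv_val := by
    letI : NormedAlgebra ℚ (E →L[ℂ] E) := NormedAlgebra.restrictScalars ℚ ℂ _
    rw [← exp_add_of_commute (Commute.refl T).neg_left, neg_add_cancel, exp_zero]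

/-- `Bseq A i` is `B_i = A_i A_{i-1}⁻¹` (with the junk value `B_0 = 1`). -/
def Bseq (A : ℕ → (E →L[ℂ] E)ˣ) (i : ℕ) : (E →L[ℂ] E)ˣ := A i * (A (i - 1))⁻¹

/-- Condition (*): for any subsequence, after passing to a further subsequence, `B_{α+1}` and
`B_{α+2}` both converge (in operator norm) to `g e^Λ g⁻¹` for some unitary `g`. -/
def CondStar (A : ℕ → (E →L[ℂ] E)ˣ) (Λ : E →L[ℂ] E) : Prop :=
  ∀ φ : ℕ → ℕ, StrictMono φ → ∃ ψ : ℕ → ℕ, StrictMono ψ ∧ ∃ g : (E →L[ℂ] E)ˣ,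
    (g : E →L[ℂ] E) ∈ unitary (E →L[ℂ] E) ∧
    Tendsto (fun j => (Bseq A (φ (ψ j) + 1) : E →L[ℂ] E)) atTop
      (𝓝 ((g * expUnit Λ * g⁻¹ : (E →L[ℂ] E)ˣ) : E →L[ℂ] E)) ∧
    Tendsto (fun j => (Bseq A (φ (ψ j) + 2) : E →L[ℂ] E)) atTop
      (𝓝 ((g * expUnit Λ * g⁻¹ : (E →L[ℂ] E)ˣ) : E →L[ℂ] E))

/-- Condition (*)' for a given gauge sequence `g`: `g 0 = 1`, each `g i` is unitary,
`B_i g_i e^{-Λ} g_i⁻¹ → Id` and `g_{i-1}⁻¹ g_i → Id`. -/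
def CondStar' (A : ℕ → (E →L[ℂ] E)ˣ) (Λ : E →L[ℂ] E) (g : ℕ → (E →L[ℂ] E)ˣ) : Prop :=
  g 0 = 1 ∧ (∀ i, (g i : E →L[ℂ] E) ∈ unitary (E →L[ℂ] E)) ∧
  Tendsto (fun i => ((Bseq A i * g i * expUnit (-Λ) * (g i)⁻¹ : (E →L[ℂ] E)ˣ) : E →L[ℂ] E))
    atTop (𝓝 1) ∧
  Tendsto (fun i => (((g (i - 1))⁻¹ * g i : (E →L[ℂ] E)ˣ) : E →L[ℂ] E)) atTop (𝓝 1)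

/-- Membership in `G_Λ = {g ∈ G : g Λ g⁻¹ = Λ}`. -/
def InGΛ (Λ : E →L[ℂ] E) (h : (E →L[ℂ] E)ˣ) : Prop :=
  (h : E →L[ℂ] E) * Λ = Λ * (h : E →L[ℂ] E)

/-- Membership in `K_Λ = {g ∈ K : g Λ g⁻¹ = Λ}`. -/
def InKΛ (Λ : E →L[ℂ] E) (h : (E →L[ℂ] E)ˣ) : Prop :=
  (h : E →L[ℂ] E) ∈ unitary (E →L[ℂ] E) ∧ InGΛ Λ h

/-- A (continuous, finite-dimensional) complex representation `ρ` of `G = GL(E)` on a Hermitian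
vector space `V`, mapping unitary elements to unitary elements, together with a self-adjoint
operator `Λ_V` on `V` compatible with `Λ` via `ρ(e^{tΛ}) = e^{tΛ_V}`. -/
structure Rep (Λ : E →L[ℂ] E) (V : Type*) [NormedAddCommGroup V] [InnerProductSpace ℂ V]
    [FiniteDimensional ℂ V] where
  ρ : (E →L[ℂ] E)ˣ →* (V →L[ℂ] V)ˣ
  continuous_ρ : Continuous fun u : (E →L[ℂ] E)ˣ => ((ρ u : (V →L[ℂ] V)ˣ) : V →L[ℂ] V)
  unitary_ρ : ∀ u : (E →L[ℂ] E)ˣ, (u : E →L[ℂ] E) ∈ unitary (E →L[ℂ] E) →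
    ((ρ u : (V →L[ℂ] V)ˣ) : V →L[ℂ] V) ∈ unitary (V →L[ℂ] V)
  ΛV : V →L[ℂ] V
  selfAdjoint_ΛV : IsSelfAdjoint ΛV
  exp_eq : ∀ t : ℝ, ((ρ (expUnit ((t : ℂ) • Λ)) : (V →L[ℂ] V)ˣ) : V →L[ℂ] V)
      = exp ((t : ℂ) • ΛV)

variable {Λ : E →L[ℂ] E}

theorem unit_apply_ne_zero (u : (V →L[ℂ] V)ˣ) {v : V} (hv : v ≠ 0) :
    (u : V →L[ℂ] V) v ≠ 0 := by
  intro h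
  apply hv
  have h2 : (((u⁻¹ : (V →L[ℂ] V)ˣ) : V →L[ℂ] V) * (u : V →L[ℂ] V)) v = 0 := by
    rw [ContinuousLinearMap.mul_apply, h, map_zero]
  rwa [Units.inv_mul, ContinuousLinearMap.one_apply] at h2

theorem unit_apply_injective (u : (V →L[ℂ] V)ˣ) :
    Function.Injective ((u : V →L[ℂ] V) : V → V) := by
  intro a b hab
  have h2 := congrArg (fun x => ((u⁻¹ : (V →L[ℂ] V)ˣ) : V →L[ℂ] V) x) hab
  simpa [← ContinuousLinearMap.mul_apply, Units.inv_mul] using h2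

/-- `f_i(v) = log ‖ρ(A_i) v‖`. -/
def fseq (R : Rep Λ V) (A : ℕ → (E →L[ℂ] E)ˣ) (v : V) (i : ℕ) : ℝ :=
  Real.log ‖(R.ρ (A i) : V →L[ℂ] V) v‖

/-- The quotient topology on the projectivization of a topological vector space. -/
instance : TopologicalSpace (ℙ ℂ V) := instTopologicalSpaceQuotient

/-- The natural action of `GL(E)` on `ℙ(V)` through the representation `R`. -/
def pact (R : Rep Λ V) (u : (E →L[ℂ] E)ˣ) : ℙ ℂ V → ℙ ℂ V :=
  Projectivization.map (((R.ρ u : (V →L[ℂ] V)ˣ) : V →L[ℂ] V) : V →ₗ[ℂ] V)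
    (unit_apply_injective _)

/-- The limit set `Lim(v) ⊆ ℙ(V)`: the union of the `ρ(K_Λ)`-orbits of all subsequential limits
of `[ρ(g_i⁻¹ A_i) v]`. -/
def LimSet (R : Rep Λ V) (A g : ℕ → (E →L[ℂ] E)ˣ) {v : V} (hv : v ≠ 0) :
    Set (ℙ ℂ V) :=
  {y | ∃ (w : V) (hw : w ≠ 0) (k : (E →L[ℂ] E)ˣ), InKΛ Λ k ∧
    y = Projectivization.mk ℂ ((R.ρ k : V →L[ℂ] V) w) (unit_apply_ne_zero _ hw) ∧
    ∃ φ : ℕ → ℕ, StrictMono φ ∧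
      Tendsto (fun j => Projectivization.mk ℂ
          ((R.ρ ((g (φ j))⁻¹ * A (φ j)) : V →L[ℂ] V) v) (unit_apply_ne_zero _ hv))
        atTop (𝓝 (Projectivization.mk ℂ w hw))}

/-- The eigenspace `U` of `Λ` with (real) eigenvalue `c`. -/
def eigU (Λ : E →L[ℂ] E) (c : ℝ) : Submodule ℂ E :=
  Module.End.eigenspace (Λ : E →ₗ[ℂ] E) (c : ℂ)

/-- The weight `d(v) = lim_i i⁻¹ log ‖A_i v‖` for the standard representation of `GL(E)` on `E`
(a junk value if the limit does not exist). -/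
def dstd (A : ℕ → (E →L[ℂ] E)ˣ) (v : E) : ℝ :=
  limUnder atTop fun i : ℕ => Real.log ‖(A i : E →L[ℂ] E) v‖ / i

/-- `p_s = Σ_{k ≤ s} n_k` where `n_k = dim U_k`. -/
def psum (Λ : E →L[ℂ] E) {r : ℕ} (lam : Fin r → ℝ) (s : Fin r) : ℕ :=
  ∑ k ∈ Finset.univ.filter (fun k => k ≤ s), Module.finrank ℂ (eigU Λ (lam k))

/-- `q_s = Σ_{k ≥ s} n_k` where `n_k = dim U_k`. -/
def qsum (Λ : E →L[ℂ] E) {r : ℕ} (lam : Fin r → ℝ) (s : Fin r) : ℕ :=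
  ∑ k ∈ Finset.univ.filter (fun k => s ≤ k), Module.finrank ℂ (eigU Λ (lam k))

/-- A model for the `p`-th exterior power of `E`, with its induced Hermitian metric
(determined by `⟨x₁∧⋯∧x_p, y₁∧⋯∧y_p⟩ = det(⟨x_i, y_j⟩)`), the induced representation of `GL(E)`,
and the induced self-adjoint operator (the derivation extension of `Λ`, pinned down by
`Rep.exp_eq` and equivariance of `wedge`). -/
structure ExtPower (Λ : E →L[ℂ] E) (p : ℕ) where
  P : Type
  [normed : NormedAddCommGroup P]
  [ips : InnerProductSpace ℂ P]
  [fd : FiniteDimensional ℂ P]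
  R : Rep Λ P
  wedge : E [⋀^Fin p]→ₗ[ℂ] P
  wedge_map : ∀ (u : (E →L[ℂ] E)ˣ) (x : Fin p → E),
    ((R.ρ u : (P →L[ℂ] P)ˣ) : P →L[ℂ] P) (wedge x) = wedge fun j => (u : E →L[ℂ] E) (x j)
  wedge_inner : ∀ x y : Fin p → E,
    (inner ℂ (wedge x) (wedge y) : ℂ) = (Matrix.of fun i j : Fin p => (inner ℂ (x i) (y j) : ℂ)).det
  wedge_span : Submodule.span ℂ (Set.range wedge) = ⊤

attribute [instance] ExtPower.normed ExtPower.ips ExtPower.fd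

/-- A bundle of the choices made in Section 2 of the paper: a gauge sequence `g` as in (*)',
the filtration `V_s` (with `V_{r+1} = 0`), complements `W_s` with `V_s = W_s ⊕ V_{s+1}` and
`Lim(W_s) = {[⋀^{n_s} U_s]}`, and identifications `C_i → Id` carrying `g_i⁻¹ A_i · W_s`
onto `U_s`. -/
structure Choices (A : ℕ → (E →L[ℂ] E)ˣ) (Λ : E →L[ℂ] E) (r : ℕ) (lam : Fin r → ℝ)
    (EP : ∀ p : ℕ, ExtPower Λ p) where
  g : ℕ → (E →L[ℂ] E)ˣ
  hg : CondStar' A Λ g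
  Vsub : Fin (r + 1) → Submodule ℂ E
  hVsub : ∀ s : Fin r, (Vsub s.castSucc : Set E) = {v : E | v = 0 ∨ dstd A v ≤ lam s}
  hVlast : Vsub (Fin.last r) = ⊥
  W : Fin r → Submodule ℂ E
  hW_sup : ∀ s : Fin r, W s ⊔ Vsub s.succ = Vsub s.castSucc
  hW_inf : ∀ s : Fin r, W s ⊓ Vsub s.succ = ⊥
  hW_lim : ∀ s : Fin r, ∀ b : Fin (Module.finrank ℂ (eigU Λ (lam s))) → E,
    LinearIndependent ℂ b → Submodule.span ℂ (Set.range b) = W s →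
    ∀ c : Fin (Module.finrank ℂ (eigU Λ (lam s))) → E,
    LinearIndependent ℂ c → Submodule.span ℂ (Set.range c) = eigU Λ (lam s) →
    ∃ (hb : (EP (Module.finrank ℂ (eigU Λ (lam s)))).wedge b ≠ 0)
      (hc : (EP (Module.finrank ℂ (eigU Λ (lam s)))).wedge c ≠ 0),
      LimSet (EP (Module.finrank ℂ (eigU Λ (lam s)))).R A g hb
        = {Projectivization.mk ℂ ((EP (Module.finrank ℂ (eigU Λ (lam s)))).wedge c) hc}
  C : ℕ → (E →L[ℂ] E)ˣ
  hC_lim : Tendsto (fun i => (C i : E →L[ℂ] E)) atTop (𝓝 1)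
  hC_map : ∀ (s : Fin r) (i : ℕ),
    Submodule.map ((((C i * (g i)⁻¹ * A i : (E →L[ℂ] E)ˣ) : E →L[ℂ] E) : E →ₗ[ℂ] E)) (W s)
      = eigU Λ (lam s)

/-- A model for the symmetric algebra `Sym(E*) = ⊕_k Sym^k(E*)` on the dual of `E`:
each graded piece is a Hermitian space carrying a compatible representation of `GL(E)`
(induced by the dual of the standard representation), `gen` identifies the degree-one piece
with `E*` equivariantly, and the product is bilinear, equivariant, has no zero divisors, and
together with the generators spans each graded piece. -/
structure SymModel (Λ : E →L[ℂ] E) where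
  P : ℕ → Type
  [normed : ∀ k, NormedAddCommGroup (P k)]
  [ips : ∀ k, InnerProductSpace ℂ (P k)]
  [fd : ∀ k, FiniteDimensional ℂ (P k)]
  R : ∀ k, Rep Λ (P k)
  mul : ∀ {k l : ℕ}, P k →ₗ[ℂ] P l →ₗ[ℂ] P (k + l)
  mul_equivariant : ∀ {k l : ℕ} (u : (E →L[ℂ] E)ˣ) (x : P k) (y : P l),
    (((R (k + l)).ρ u : (P (k + l) →L[ℂ] P (k + l))ˣ) : P (k + l) →L[ℂ] P (k + l)) (mul x y)
      = mul ((((R k).ρ u : (P k →L[ℂ] P k)ˣ) : P k →L[ℂ] P k) x)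
            ((((R l).ρ u : (P l →L[ℂ] P l)ˣ) : P l →L[ℂ] P l) y)
  mul_ne_zero : ∀ {k l : ℕ} {x : P k} {y : P l}, x ≠ 0 → y ≠ 0 → mul x y ≠ 0
  gen : (E →L[ℂ] ℂ) ≃ₗ[ℂ] P 1
  gen_equivariant : ∀ (u : (E →L[ℂ] E)ˣ) (l : E →L[ℂ] ℂ),
    (((R 1).ρ u : (P 1 →L[ℂ] P 1)ˣ) : P 1 →L[ℂ] P 1) (gen l)
      = gen (l.comp (((u⁻¹ : (E →L[ℂ] E)ˣ) : E →L[ℂ] E)))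
  span_gen_mul : ∀ k : ℕ, Submodule.span ℂ
      {z : P (k + 1) | ∃ (x : P k) (l : E →L[ℂ] ℂ), z = mul x (gen l)} = ⊤

attribute [instance] SymModel.normed SymModel.ips SymModel.fd

end CSW

/-!
Write `x_i = ρ(A_i) v`, `a_i = f_{i+1}(v) - f_i(v)`, `S = e^{Λ_V}` and
`γ(y) = log ‖S y‖ - log ‖y‖`. Along a subsequence on which `B_{i+1}, B_{i+2} → g e^Λ g⁻¹` and
`[x_i] → [w]`, the increments `a_i` and `a_{i+1}` converge to `γ(y)` and `γ(S y)`, where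
`y = ρ(g)⁻¹ w`. As `S` is positive self-adjoint, Cauchy–Schwarz gives `γ(y) ≤ γ(S y)`, with
equality only when `Λ_V y = γ(y) y`. By (*) such subsequences are everywhere, so `(a_i)` is
bounded, its downward steps tend to `0`, and it can cross a level `c` downward in the limit only
if `c` is one of the finitely many eigenvalues of `Λ_V`. Hence `(a_i)` converges, and by Cesàro
its limit is `d`. Along the given subsequence both limits are then `d`, so `y` lies in the
`d`-eigenspace.
-/

section RealSequences

theorem Nat.exists_le_and_not_succ {p : ℕ → Prop} {s t : ℕ} (hst : s ≤ t) (hs : p s)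
    (ht : ¬ p t) : ∃ i, s ≤ i ∧ p i ∧ ¬ p (i + 1) := by
  induction t, hst using Nat.le_induction with
  | base => exact absurd hs ht
  | succ t hst ih =>
    by_cases hpt : p t
    · exact ⟨t, hst, hpt, ht⟩
    · exact ih hpt

theorem Filter.frequently_le_and_succ_lt {a : ℕ → ℝ} {c : ℝ} (hge : ∃ᶠ i in atTop, c ≤ a i)
    (hlt : ∃ᶠ i in atTop, a i < c) : ∃ᶠ i in atTop, c ≤ a i ∧ a (i + 1) < c := by
  rw [frequently_atTop] at hge hlt ⊢
  intro N
  obtain ⟨s, hNs, hs⟩ := hge N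
  obtain ⟨t, hst, ht⟩ := hlt s
  obtain ⟨i, hsi, hi, hi'⟩ := Nat.exists_le_and_not_succ (p := (c ≤ a ·)) hst hs ht.not_ge
  exact ⟨i, hNs.trans hsi, hi, lt_of_not_ge hi'⟩

theorem isBoundedUnder_abs_of_forall_subseq {a : ℕ → ℝ}
    (h : ∀ θ : ℕ → ℕ, StrictMono θ →
      ∃ ψ : ℕ → ℕ, StrictMono ψ ∧ ∃ c, Tendsto (fun j => a (θ (ψ j))) atTop (𝓝 c)) :
    IsBoundedUnder (· ≤ ·) atTop fun i => |a i| := by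
  by_contra hunbdd
  have hlarge : ∀ n : ℕ, ∃ᶠ i in atTop, (n : ℝ) < |a i| := fun n =>
    (not_eventually.1 fun hle => hunbdd ⟨n, hle⟩).mono fun _ => lt_of_not_ge
  obtain ⟨θ, hθ, hθa⟩ := extraction_forall_of_frequently hlarge
  obtain ⟨ψ, hψ, c, hc⟩ := h θ hθ
  refine not_tendsto_atTop_of_tendsto_nhds hc.abs (tendsto_atTop_mono (fun j => ?_)
    tendsto_natCast_atTop_atTop)
  exact (Nat.cast_le.2 hψ.le_apply).trans (hθa (ψ j)).le

theorem tendsto_limsup_of_downcrossing_levels_finite {a : ℕ → ℝ} {F : Set ℝ} (hF : F.Finite)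
    (hbdd : IsBoundedUnder (· ≤ ·) atTop fun i => |a i|)
    (hdrop : ∀ ε > 0, ∀ᶠ i in atTop, a i - ε ≤ a (i + 1))
    (hlevel : ∀ (c : ℝ) (t : ℕ → ℕ), StrictMono t → Tendsto (fun k => a (t k)) atTop (𝓝 c) →
      (∀ k, a (t k + 1) ≤ c) → c ∈ F) :
    Tendsto a atTop (𝓝 (limsup a atTop)) := by
  obtain ⟨hup, hlow⟩ := isBoundedUnder_le_abs.1 hbdd
  refine tendsto_of_liminf_eq_limsup ?_ rfl hup hlow
  by_contra hne
  obtain ⟨c, ⟨hlc, hcu⟩, hcF⟩ := ((Set.Ioo_infinite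
    ((liminf_le_limsup hup hlow).lt_of_ne hne)).sdiff hF).nonempty
  have hcross := frequently_le_and_succ_lt
    ((frequently_lt_of_lt_limsup hlow.isCoboundedUnder_flip hcu).mono fun _ => le_of_lt)
    (frequently_lt_of_liminf_lt hup.isCoboundedUnder_flip hlc)
  obtain ⟨t, ht, hta⟩ := extraction_of_frequently_atTop hcross
  refine hcF (hlevel c t ht (tendsto_order.2 ⟨fun b hb => ?_, fun b hb => ?_⟩)
    fun k => (hta k).2.le)
  · exact Eventually.of_forall fun k => hb.trans_le (hta k).1
  · filter_upwards [ht.tendsto_atTop.eventually (hdrop (b - c) (sub_pos.2 hb))] with k hk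
    linarith [(hta k).2]

theorem Filter.Tendsto.div_natCast_of_sub_succ {f : ℕ → ℝ} {c : ℝ}
    (h : Tendsto (fun i => f (i + 1) - f i) atTop (𝓝 c)) :
    Tendsto (fun n : ℕ => f n / n) atTop (𝓝 c) := by
  have := h.cesaro.add (tendsto_const_div_atTop_nhds_zero_nat (f 0))
  rw [add_zero] at this
  refine this.congr fun n => ?_
  rw [Finset.sum_range_sub, inv_mul_eq_div, ← add_div, sub_add_cancel]

end RealSequences

section LogGain

variable {𝕜 F : Type*} [NontriviallyNormedField 𝕜] [NormedAddCommGroup F] [NormedSpace 𝕜 F]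

def logGain (S : F →L[𝕜] F) (y : F) : ℝ := Real.log ‖S y‖ - Real.log ‖y‖

theorem logGain_smul {S : F →L[𝕜] F} {y : F} (hy : y ≠ 0) (hSy : S y ≠ 0)
    {c : 𝕜} (hc : c ≠ 0) : logGain S (c • y) = logGain S y := by
  simp only [logGain, map_smul, norm_smul]
  rw [Real.log_mul (norm_ne_zero_iff.2 hc) (norm_ne_zero_iff.2 hSy),
    Real.log_mul (norm_ne_zero_iff.2 hc) (norm_ne_zero_iff.2 hy)]
  ring

theorem norm_apply_eq_of_logGain_eq {S : F →L[𝕜] F} {y : F} (hy : y ≠ 0)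
    (hSy : S y ≠ 0) {c : ℝ} (h : logGain S y = c) : ‖S y‖ = Real.exp c * ‖y‖ := by
  rw [← h, logGain, Real.exp_sub, Real.exp_log (norm_pos_iff.2 hSy),
    Real.exp_log (norm_pos_iff.2 hy), div_mul_cancel₀ _ (norm_ne_zero_iff.2 hy)]

theorem Filter.Tendsto.logGain {ι : Type*} {l : Filter ι}
    {M : ι → F →L[𝕜] F} {N : F →L[𝕜] F} {y : ι → F} {w : F}
    (hM : Tendsto M l (𝓝 N)) (hy : Tendsto y l (𝓝 w)) (hNw : N w ≠ 0) (hw : w ≠ 0) :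
    Tendsto (fun j => logGain (M j) (y j)) l (𝓝 (logGain N w)) :=
  ((((continuous_fst.clm_apply continuous_snd).tendsto (N, w)).comp
    (hM.prodMk_nhds hy)).norm.log (norm_ne_zero_iff.2 hNw)).sub
    (hy.norm.log (norm_ne_zero_iff.2 hw))

end LogGain

section SelfAdjoint

variable {𝕜 F : Type*} [RCLike 𝕜] [NormedAddCommGroup F] [InnerProductSpace 𝕜 F] [CompleteSpace F]
  {S : F →L[𝕜] F}

theorem IsSelfAdjoint.inner_apply_apply_self (hS : IsSelfAdjoint S) (y : F) :
    inner 𝕜 (S (S y)) y = (‖S y‖ ^ 2 : 𝕜) := by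
  rw [← ContinuousLinearMap.adjoint_inner_right, ← ContinuousLinearMap.star_eq_adjoint, hS.star_eq,
    inner_self_eq_norm_sq_to_K]

theorem IsSelfAdjoint.norm_apply_sq_le (hS : IsSelfAdjoint S) (y : F) :
    ‖S y‖ ^ 2 ≤ ‖S (S y)‖ * ‖y‖ := by
  calc ‖S y‖ ^ 2 = ‖inner 𝕜 (S (S y)) y‖ := by
        rw [hS.inner_apply_apply_self, ← RCLike.ofReal_pow, RCLike.norm_ofReal, abs_sq]
    _ ≤ ‖S (S y)‖ * ‖y‖ := norm_inner_le_norm _ _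

theorem IsSelfAdjoint.logGain_le_logGain_apply (hS : IsSelfAdjoint S) {y : F} (hSy : S y ≠ 0) :
    logGain S y ≤ logGain S (S y) := by
  have hy : y ≠ 0 := fun h => hSy (by rw [h, map_zero])
  have hpos : 0 < ‖S (S y)‖ * ‖y‖ :=
    (pow_pos (norm_pos_iff.2 hSy) 2).trans_le (hS.norm_apply_sq_le y)
  have hSSy : S (S y) ≠ 0 := norm_pos_iff.1 (pos_of_mul_pos_left hpos (norm_nonneg _))
  have hlog := Real.log_le_log (by positivity) (hS.norm_apply_sq_le y)
  rw [Real.log_pow, Real.log_mul (norm_ne_zero_iff.2 hSSy) (norm_ne_zero_iff.2 hy)] at hlog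
  simp only [logGain]
  push_cast at hlog
  linarith

/-- The equality case of `IsSelfAdjoint.norm_apply_sq_le`. -/
theorem IsSelfAdjoint.apply_apply_eq_of_norm_eq (hS : IsSelfAdjoint S) {y : F} {r : ℝ}
    (h₁ : ‖S y‖ = r * ‖y‖) (h₂ : ‖S (S y)‖ = r * ‖S y‖) : S (S y) = ((r ^ 2 : ℝ) : 𝕜) • y := by
  rw [← sub_eq_zero, ← norm_eq_zero, ← sq_eq_zero_iff, norm_sub_sq (𝕜 := 𝕜), inner_smul_right,
    hS.inner_apply_apply_self, norm_smul, h₂, h₁, RCLike.norm_ofReal, abs_of_nonneg (sq_nonneg r)]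
  simp only [← RCLike.ofReal_pow, ← RCLike.ofReal_mul, RCLike.ofReal_re]
  ring

end SelfAdjoint

section Exp

variable {F : Type*} [NormedAddCommGroup F] [NormedSpace ℂ F] [CompleteSpace F] {T : F →L[ℂ] F}

theorem exp_apply_of_apply_eq_smul {b : F} {μ : ℂ} (h : T b = μ • b) :
    exp T b = Complex.exp μ • b := by
  have hpow : ∀ n : ℕ, (T ^ n) b = μ ^ n • b := by
    intro n
    induction n with
    | zero => simp
    | succ n ih => rw [pow_succ', mul_apply_eq_comp, ih, map_smul, h, smul_smul, pow_succ]
  have hT := (exp_series_hasSum_exp' (𝕂 := ℂ) T).mapL (ContinuousLinearMap.apply ℂ F b)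
  have hμ := (exp_series_hasSum_exp' (𝕂 := ℂ) μ).smul_const b
  simp only [ContinuousLinearMap.apply_apply, smul_apply, hpow, smul_smul, smul_eq_mul] at hT hμ
  rw [Complex.exp_eq_exp_ℂ]
  exact hT.unique hμ

theorem exp_apply_ne_zero {z : F} (hz : z ≠ 0) : exp T z ≠ 0 := by
  let _ : NormedAlgebra ℚ (F →L[ℂ] F) := NormedAlgebra.restrictScalars ℚ ℂ _
  exact (map_ne_zero_iff _
    (ContinuousLinearMap.isUnit_iff_bijective.1 (isUnit_exp T)).injective).2 hz

end Exp

section SelfAdjointExp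

variable {F : Type*} [NormedAddCommGroup F] [InnerProductSpace ℂ F] [FiniteDimensional ℂ F]
  {T : F →L[ℂ] F}

theorem IsSelfAdjoint.apply_eq_smul_of_exp_apply_eq (hT : IsSelfAdjoint T) {y : F} {c : ℝ}
    (h : NormedSpace.exp T y = (Real.exp c : ℂ) • y) : T y = (c : ℂ) • y := by
  have hsym := ContinuousLinearMap.isSelfAdjoint_iff_isSymmetric.1 hT
  set b := hsym.eigenvectorBasis rfl
  set μ := hsym.eigenvalues rfl
  have hexp : ∀ i, NormedSpace.exp T (b i) = (Real.exp (μ i) : ℂ) • b i := fun i => by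
    rw [exp_apply_of_apply_eq_smul (hsym.apply_eigenvectorBasis rfl i), Complex.ofReal_exp]
    rfl
  have hcoord : ∀ i, (Real.exp (μ i) : ℂ) * b.repr y i = Real.exp c * b.repr y i := fun i => by
    simp only [b.repr_apply_apply]
    rw [← Complex.conj_ofReal, ← inner_smul_left, ← hexp,
      ← ContinuousLinearMap.adjoint_inner_right, ← ContinuousLinearMap.star_eq_adjoint,
      hT.exp.star_eq, h, inner_smul_right]
  apply b.repr.injective
  ext i
  rw [show b.repr (T y) i = μ i * b.repr y i from hsym.eigenvectorBasis_apply_self_apply rfl y i,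
    map_smul, PiLp.smul_apply, smul_eq_mul]
  rcases eq_or_ne (b.repr y i) 0 with hi | hi
  · rw [hi, mul_zero, mul_zero]
  · rw [Real.exp_injective (Complex.ofReal_injective (mul_right_cancel₀ hi (hcoord i)))]

theorem IsSelfAdjoint.apply_eq_smul_of_logGain_eq (hT : IsSelfAdjoint T) {y : F} {c : ℝ}
    (h₁ : logGain (NormedSpace.exp T) y = c)
    (h₂ : logGain (NormedSpace.exp T) (NormedSpace.exp T y) = c) :
    T y = (c : ℂ) • y := by
  rcases eq_or_ne y 0 with rfl | hy
  · simp
  have hSy := exp_apply_ne_zero (T := T) hy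
  have hsq := hT.exp.apply_apply_eq_of_norm_eq (norm_apply_eq_of_logGain_eq hy hSy h₁)
    (norm_apply_eq_of_logGain_eq hSy (exp_apply_ne_zero hSy) h₂)
  have h2T : (T + T) y = ((2 * c : ℝ) : ℂ) • y := by
    let _ : NormedAlgebra ℚ (F →L[ℂ] F) := NormedAlgebra.restrictScalars ℚ ℂ _
    refine (hT.add hT).apply_eq_smul_of_exp_apply_eq ?_
    rw [exp_add_of_commute (Commute.refl T), mul_apply_eq_comp, hsq, ← Real.exp_nat_mul,
      Nat.cast_ofNat]
    rfl
  have h2 : (2 : ℂ) • T y = (2 : ℂ) • ((c : ℂ) • y) := by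
    rw [two_smul, ← add_apply, h2T, smul_smul, Complex.ofReal_mul, Complex.ofReal_ofNat]
  exact smul_right_injective F two_ne_zero h2

end SelfAdjointExp

section Compactness

variable {𝕜 F : Type*} [RCLike 𝕜] [NormedAddCommGroup F] [NormedSpace 𝕜 F] [FiniteDimensional 𝕜 F]

theorem exists_subseq_smul_tendsto {x : ℕ → F} (hx : ∀ i, x i ≠ 0) :
    ∃ σ : ℕ → ℕ, StrictMono σ ∧ ∃ c : ℕ → 𝕜, (∀ j, c j ≠ 0) ∧
      ∃ w : F, w ≠ 0 ∧ Tendsto (fun j => c j • x (σ j)) atTop (𝓝 w) := by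
  have := FiniteDimensional.proper_rclike 𝕜 F
  have hsphere : ∀ i, (‖x i‖ : 𝕜)⁻¹ • x i ∈ Metric.sphere (0 : F) 1 := fun i => by
    simp [norm_smul, hx i]
  obtain ⟨w, hw, σ, hσ, hlim⟩ := (isCompact_sphere (0 : F) 1).tendsto_subseq hsphere
  refine ⟨σ, hσ, fun j => (‖x (σ j)‖ : 𝕜)⁻¹, fun j => by simp [hx], w, ?_, hlim⟩
  rintro rfl
  simp at hw

end Compactness

namespace CSW

variable {E : Type*} [NormedAddCommGroup E] [InnerProductSpace ℂ E] [FiniteDimensional ℂ E]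
variable {V : Type*} [NormedAddCommGroup V] [InnerProductSpace ℂ V] [FiniteDimensional ℂ V]
variable {Λ : E →L[ℂ] E}

theorem tendsto_mk_of_smul_tendsto {ι : Type*} {l : Filter ι} {x : ι → V} (hx : ∀ j, x j ≠ 0)
    {c : ι → ℂ} (hc : ∀ j, c j ≠ 0) {w : V} (hw : w ≠ 0)
    (h : Tendsto (fun j => c j • x j) l (𝓝 w)) :
    Tendsto (fun j => Projectivization.mk ℂ (x j) (hx j)) l (𝓝 (Projectivization.mk ℂ w hw)) := by
  have hmk : ∀ j, Projectivization.mk ℂ (c j • x j) (smul_ne_zero (hc j) (hx j))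
      = Projectivization.mk ℂ (x j) (hx j) := fun j =>
    (Projectivization.mk_eq_mk_iff' ℂ _ _ _ _).2 ⟨c j, rfl⟩
  exact (((continuous_quotient_mk'.tendsto _).comp
    (tendsto_subtype_rng.2 h : Tendsto (fun j => (⟨c j • x j, smul_ne_zero (hc j) (hx j)⟩ :
      {v : V // v ≠ 0})) l _))).congr hmk

namespace Rep

variable (R : Rep Λ V)

theorem rho_expUnit : (R.ρ (expUnit Λ) : V →L[ℂ] V) = exp R.ΛV := by
  simpa using R.exp_eq 1

theorem tendsto_rho {B : ℕ → (E →L[ℂ] E)ˣ} {H : (E →L[ℂ] E)ˣ}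
    (h : Tendsto (fun j => (B j : E →L[ℂ] E)) atTop (𝓝 (H : E →L[ℂ] E))) :
    Tendsto (fun j => (R.ρ (B j) : V →L[ℂ] V)) atTop (𝓝 (R.ρ H : V →L[ℂ] V)) :=
  (R.continuous_ρ.tendsto H).comp (Units.isOpenEmbedding_val.isEmbedding.tendsto_nhds_iff.2 h)

theorem rho_conj_apply (g : (E →L[ℂ] E)ˣ) (z : V) :
    (R.ρ (g * expUnit Λ * g⁻¹) : V →L[ℂ] V) z
      = (R.ρ g : V →L[ℂ] V) (exp R.ΛV ((((R.ρ g)⁻¹ : (V →L[ℂ] V)ˣ) : V →L[ℂ] V) z)) := by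
  rw [map_mul, map_mul, map_inv, Units.val_mul, Units.val_mul, mul_apply_eq_comp,
    mul_apply_eq_comp, rho_expUnit]

theorem rho_inv_rho_conj_apply (g : (E →L[ℂ] E)ˣ) (z : V) :
    (((R.ρ g)⁻¹ : (V →L[ℂ] V)ˣ) : V →L[ℂ] V) ((R.ρ (g * expUnit Λ * g⁻¹) : V →L[ℂ] V) z)
      = exp R.ΛV ((((R.ρ g)⁻¹ : (V →L[ℂ] V)ˣ) : V →L[ℂ] V) z) := by
  rw [rho_conj_apply, ← mul_apply_eq_comp, ← Units.val_mul, inv_mul_cancel, Units.val_one,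
    one_apply_eq_self]

theorem logGain_rho_conj {g : (E →L[ℂ] E)ˣ} (hg : (g : E →L[ℂ] E) ∈ unitary (E →L[ℂ] E))
    (z : V) :
    logGain (R.ρ (g * expUnit Λ * g⁻¹) : V →L[ℂ] V) z
      = logGain (exp R.ΛV) ((((R.ρ g)⁻¹ : (V →L[ℂ] V)ˣ) : V →L[ℂ] V) z) := by
  have hU := R.unitary_ρ g hg
  have hinv : ‖(((R.ρ g)⁻¹ : (V →L[ℂ] V)ˣ) : V →L[ℂ] V) z‖ = ‖z‖ := by
    rw [← ContinuousLinearMap.norm_map_of_mem_unitary hU, ← mul_apply_eq_comp, ← Units.val_mul,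
      mul_inv_cancel, Units.val_one, one_apply_eq_self]
  rw [logGain, logGain, rho_conj_apply, ContinuousLinearMap.norm_map_of_mem_unitary hU, hinv]

variable (A : ℕ → (E →L[ℂ] E)ˣ) {v : V}

def orbit (v : V) (i : ℕ) : V := (R.ρ (A i) : V →L[ℂ] V) v

theorem orbit_ne_zero (hv : v ≠ 0) (i : ℕ) : R.orbit A v i ≠ 0 :=
  unit_apply_ne_zero _ hv

theorem orbit_succ (i : ℕ) :
    R.orbit A v (i + 1) = (R.ρ (Bseq A (i + 1)) : V →L[ℂ] V) (R.orbit A v i) := by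
  rw [orbit, orbit, ← mul_apply_eq_comp, ← Units.val_mul, ← map_mul, Bseq, Nat.add_sub_cancel,
    inv_mul_cancel_right]

theorem fseq_succ_sub_eq_logGain (hv : v ≠ 0) {c : ℂ} (hc : c ≠ 0) (i : ℕ) :
    fseq R A v (i + 1) - fseq R A v i
      = logGain (R.ρ (Bseq A (i + 1)) : V →L[ℂ] V) (c • R.orbit A v i) := by
  rw [logGain_smul (R.orbit_ne_zero A hv i) (unit_apply_ne_zero _ (R.orbit_ne_zero A hv i)) hc,
    logGain, ← orbit_succ]
  rfl

theorem tendsto_fseq_sub_of_smul_tendsto (hv : v ≠ 0) {t : ℕ → ℕ}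
    {g : (E →L[ℂ] E)ˣ} (hg : (g : E →L[ℂ] E) ∈ unitary (E →L[ℂ] E))
    (hB₁ : Tendsto (fun j => (Bseq A (t j + 1) : E →L[ℂ] E)) atTop
      (𝓝 ((g * expUnit Λ * g⁻¹ : (E →L[ℂ] E)ˣ) : E →L[ℂ] E)))
    (hB₂ : Tendsto (fun j => (Bseq A (t j + 2) : E →L[ℂ] E)) atTop
      (𝓝 ((g * expUnit Λ * g⁻¹ : (E →L[ℂ] E)ˣ) : E →L[ℂ] E)))
    {c : ℕ → ℂ} (hc : ∀ j, c j ≠ 0) {w : V} (hw : w ≠ 0)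
    (hcw : Tendsto (fun j => c j • R.orbit A v (t j)) atTop (𝓝 w)) :
    Tendsto (fun j => fseq R A v (t j + 1) - fseq R A v (t j)) atTop
        (𝓝 (logGain (exp R.ΛV) ((((R.ρ g)⁻¹ : (V →L[ℂ] V)ˣ) : V →L[ℂ] V) w))) ∧
      Tendsto (fun j => fseq R A v (t j + 2) - fseq R A v (t j + 1)) atTop
        (𝓝 (logGain (exp R.ΛV) (exp R.ΛV ((((R.ρ g)⁻¹ : (V →L[ℂ] V)ˣ) : V →L[ℂ] V) w)))) := by
  have hM₁ := R.tendsto_rho hB₁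
  have hHw := unit_apply_ne_zero (R.ρ (g * expUnit Λ * g⁻¹)) hw
  have hnext : Tendsto (fun j => c j • R.orbit A v (t j + 1)) atTop
      (𝓝 ((R.ρ (g * expUnit Λ * g⁻¹) : V →L[ℂ] V) w)) := by
    simp only [orbit_succ, ← map_smul]
    exact ((continuous_fst.clm_apply continuous_snd).tendsto _).comp (hM₁.prodMk_nhds hcw)
  constructor
  · rw [← R.logGain_rho_conj hg]
    exact (hM₁.logGain hcw hHw hw).congr fun j =>
      (R.fseq_succ_sub_eq_logGain A hv (hc j) (t j)).symm
  · rw [← rho_inv_rho_conj_apply, ← R.logGain_rho_conj hg]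
    exact ((R.tendsto_rho hB₂).logGain hnext (unit_apply_ne_zero _ hHw) hHw).congr fun j =>
      (R.fseq_succ_sub_eq_logGain A hv (hc j) (t j + 1)).symm

end Rep

namespace CondStar

variable {A : ℕ → (E →L[ℂ] E)ˣ} (hstar : CondStar A Λ) (R : Rep Λ V) {v : V} (hv : v ≠ 0)
include hstar hv

theorem exists_subseq_tendsto_logGain {θ : ℕ → ℕ} (hθ : StrictMono θ) :
    ∃ ψ : ℕ → ℕ, StrictMono ψ ∧ ∃ y : V, y ≠ 0 ∧
      Tendsto (fun j => fseq R A v (θ (ψ j) + 1) - fseq R A v (θ (ψ j))) atTop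
        (𝓝 (logGain (exp R.ΛV) y)) ∧
      Tendsto (fun j => fseq R A v (θ (ψ j) + 2) - fseq R A v (θ (ψ j) + 1)) atTop
        (𝓝 (logGain (exp R.ΛV) (exp R.ΛV y))) := by
  obtain ⟨ψ, hψ, g, hg, hB₁, hB₂⟩ := hstar θ hθ
  obtain ⟨σ, hσ, c, hc, w, hw, hcw⟩ :=
    exists_subseq_smul_tendsto (𝕜 := ℂ) fun j => R.orbit_ne_zero A hv (θ (ψ j))
  obtain ⟨h₁, h₂⟩ := R.tendsto_fseq_sub_of_smul_tendsto A hv hg (hB₁.comp hσ.tendsto_atTop)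
    (hB₂.comp hσ.tendsto_atTop) hc hw hcw
  exact ⟨ψ ∘ σ, hψ.comp hσ, _, unit_apply_ne_zero _ hw, h₁, h₂⟩

theorem isBoundedUnder_abs_fseq_sub :
    IsBoundedUnder (· ≤ ·) atTop fun i => |fseq R A v (i + 1) - fseq R A v i| :=
  isBoundedUnder_abs_of_forall_subseq fun _ hθ => by
    obtain ⟨ψ, hψ, _, _, h₁, -⟩ := hstar.exists_subseq_tendsto_logGain R hv hθ
    exact ⟨ψ, hψ, _, h₁⟩

theorem eventually_fseq_sub_le {ε : ℝ} (hε : 0 < ε) :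
    ∀ᶠ i in atTop,
      fseq R A v (i + 1) - fseq R A v i - ε ≤ fseq R A v (i + 2) - fseq R A v (i + 1) := by
  by_contra hfreq
  obtain ⟨θ, hθ, hdrop⟩ := extraction_of_frequently_atTop (not_eventually.1 hfreq)
  obtain ⟨ψ, hψ, y, hy, h₁, h₂⟩ := hstar.exists_subseq_tendsto_logGain R hv hθ
  have hlim := le_of_tendsto_of_tendsto' h₂ (h₁.sub_const ε) fun j =>
    (lt_of_not_ge (hdrop (ψ j))).le
  linarith [R.selfAdjoint_ΛV.exp.logGain_le_logGain_apply (exp_apply_ne_zero hy)]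

theorem hasEigenvalue_of_tendsto_fseq_sub {c : ℝ} {t : ℕ → ℕ} (ht : StrictMono t)
    (hc : Tendsto (fun k => fseq R A v (t k + 1) - fseq R A v (t k)) atTop (𝓝 c))
    (hle : ∀ k, fseq R A v (t k + 2) - fseq R A v (t k + 1) ≤ c) :
    Module.End.HasEigenvalue (R.ΛV : V →ₗ[ℂ] V) c := by
  obtain ⟨ψ, hψ, y, hy, h₁, h₂⟩ := hstar.exists_subseq_tendsto_logGain R hv ht
  have hc₁ : logGain (exp R.ΛV) y = c := tendsto_nhds_unique h₁ (hc.comp hψ.tendsto_atTop)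
  have hc₂ : logGain (exp R.ΛV) (exp R.ΛV y) = c :=
    le_antisymm (le_of_tendsto' h₂ fun j => hle (ψ j))
      (hc₁ ▸ R.selfAdjoint_ΛV.exp.logGain_le_logGain_apply (exp_apply_ne_zero hy))
  exact Module.End.hasEigenvalue_of_hasEigenvector
    ⟨Module.End.mem_eigenspace_iff.2 (R.selfAdjoint_ΛV.apply_eq_smul_of_logGain_eq hc₁ hc₂), hy⟩

theorem tendsto_fseq_sub {d : ℝ} (hd : Tendsto (fun i : ℕ => fseq R A v i / i) atTop (𝓝 d)) :
    Tendsto (fun i => fseq R A v (i + 1) - fseq R A v i) atTop (𝓝 d) := by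
  have hlim := tendsto_limsup_of_downcrossing_levels_finite
    ((Module.End.finite_hasEigenvalue (R.ΛV : V →ₗ[ℂ] V)).preimage Complex.ofReal_injective.injOn)
    (hstar.isBoundedUnder_abs_fseq_sub R hv) (fun _ hε => hstar.eventually_fseq_sub_le R hv hε)
    fun _ _ ht hc hle => hstar.hasEigenvalue_of_tendsto_fseq_sub R hv ht hc hle
  rwa [tendsto_nhds_unique hd hlim.div_natCast_of_sub_succ]

end CondStar

theorem limit_in_eigenspace_general (Λ : E →L[ℂ] E)
    (A : ℕ → (E →L[ℂ] E)ˣ) (hstar : CondStar A Λ)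
    (R : Rep Λ V) (v : V) (hv : v ≠ 0) (d : ℝ)
    (hd : Tendsto (fun i : ℕ => fseq R A v i / i) atTop (𝓝 d))
    (φ : ℕ → ℕ) (hφ : StrictMono φ) (g : (E →L[ℂ] E)ˣ)
    (hg : (g : E →L[ℂ] E) ∈ unitary (E →L[ℂ] E))
    (hconv : Tendsto (fun j => (Bseq A (φ j + 1) : E →L[ℂ] E)) atTop
      (𝓝 ((g * expUnit Λ * g⁻¹ : (E →L[ℂ] E)ˣ) : E →L[ℂ] E))) :
    ∃ ψ : ℕ → ℕ, StrictMono ψ ∧ ∃ (w : V) (hw : w ≠ 0),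
      (((R.ρ g)⁻¹ : (V →L[ℂ] V)ˣ) : V →L[ℂ] V) w ∈
        Module.End.eigenspace (R.ΛV : V →ₗ[ℂ] V) (d : ℂ) ∧
      Tendsto (fun j => Projectivization.mk ℂ
          ((R.ρ (A (φ (ψ j))) : V →L[ℂ] V) v) (unit_apply_ne_zero _ hv))
        atTop (𝓝 (Projectivization.mk ℂ w hw)) := by
  have hincr := hstar.tendsto_fseq_sub R hv hd
  obtain ⟨ψ, hψ, g', -, hB₁, hB₂⟩ := hstar φ hφ
  have hg' : ((g' * expUnit Λ * g'⁻¹ : (E →L[ℂ] E)ˣ) : E →L[ℂ] E)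
      = ((g * expUnit Λ * g⁻¹ : (E →L[ℂ] E)ˣ) : E →L[ℂ] E) :=
    tendsto_nhds_unique hB₁ (hconv.comp hψ.tendsto_atTop)
  rw [hg'] at hB₁ hB₂
  obtain ⟨σ, hσ, c, hc, w, hw, hcw⟩ :=
    exists_subseq_smul_tendsto (𝕜 := ℂ) fun j => R.orbit_ne_zero A hv (φ (ψ j))
  obtain ⟨h₁, h₂⟩ := R.tendsto_fseq_sub_of_smul_tendsto A hv hg (hB₁.comp hσ.tendsto_atTop)
    (hB₂.comp hσ.tendsto_atTop) hc hw hcw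
  have ht : Tendsto (fun j => φ (ψ (σ j))) atTop atTop := (hφ.comp (hψ.comp hσ)).tendsto_atTop
  refine ⟨ψ ∘ σ, hψ.comp hσ, w, hw, Module.End.mem_eigenspace_iff.2 ?_,
    tendsto_mk_of_smul_tendsto _ hc hw hcw⟩
  exact R.selfAdjoint_ΛV.apply_eq_smul_of_logGain_eq (tendsto_nhds_unique h₁ (hincr.comp ht))
    (tendsto_nhds_unique h₂ (hincr.comp ((tendsto_add_atTop_nat 1).comp ht)))

/-- Lemma 2.3. Assume condition (*), let `v ≠ 0` with weight `d(v) = d` and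
let `U` be the eigenspace of `Λ_V` with eigenvalue `d`. Given a subsequence `(α)` with
`B_{α+1} → g e^Λ g⁻¹`, after passing to a further subsequence, `[ρ(A_α) v]` converges in
`ℙ(V)` to a point `[w]` with `ρ(g)⁻¹ w ∈ U`. -/
theorem limit_in_eigenspace (Λ : E →L[ℂ] E) (hΛ : IsSelfAdjoint Λ)
    (A : ℕ → (E →L[ℂ] E)ˣ) (hA0 : A 0 = 1) (hstar : CondStar A Λ)
    (R : Rep Λ V) (v : V) (hv : v ≠ 0) (d : ℝ)
    (hd : Tendsto (fun i : ℕ => fseq R A v i / i) atTop (𝓝 d))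
    (φ : ℕ → ℕ) (hφ : StrictMono φ) (g : (E →L[ℂ] E)ˣ)
    (hg : (g : E →L[ℂ] E) ∈ unitary (E →L[ℂ] E))
    (hconv : Tendsto (fun j => (Bseq A (φ j + 1) : E →L[ℂ] E)) atTop
      (𝓝 ((g * expUnit Λ * g⁻¹ : (E →L[ℂ] E)ˣ) : E →L[ℂ] E))) :
    ∃ ψ : ℕ → ℕ, StrictMono ψ ∧ ∃ (w : V) (hw : w ≠ 0),
      (((R.ρ g)⁻¹ : (V →L[ℂ] V)ˣ) : V →L[ℂ] V) w ∈
        Module.End.eigenspace (R.ΛV : V →ₗ[ℂ] V) (d : ℂ) ∧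
      Tendsto (fun j => Projectivization.mk ℂ
          ((R.ρ (A (φ (ψ j))) : V →L[ℂ] V) v) (unit_apply_ne_zero _ hv))
        atTop (𝓝 (Projectivization.mk ℂ w hw)) :=
  limit_in_eigenspace_general Λ A hstar R v hv d hd φ hφ g hg hconv

end CSW
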